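/- A signed graph (G, σ) has every triangle positive (equivalently, no induced subgraph switching equivalent to the all-negative triangle (K_3, −)) if and only if for every vertex v of G, the closed neighborhood N[v] = {v} ∪ N(v) is a balanced set of (G, σ). -/

import Mathlib

open SimpleGraph

namespace SignedGS

variable {V : Type*}

/-- The sign of a walk in a signed graph: the product of the signs of its edges. -/
def walkSign {G : SimpleGraph V} (σ : Sym2 V → ℤˣ) {u v : V} (w : G.Walk u v) : ℤˣ :=
  (w.edges.map σ).prod

/-- `X` is a balanced set of `(G, σ)`: every cycle of the subgraph induced on `X`
is positive. -/
def IsBalancedSet (G : SimpleGraph V) (σ : Sym2 V → ℤˣ) (X : Set V) : Prop :=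
  ∀ ⦃v : V⦄ (w : G.Walk v v), w.IsCycle → (∀ u ∈ w.support, u ∈ X) → walkSign σ w = 1

/-- `(G, σ)` can be covered by `n` balanced sets. -/
def BalancedColorable (G : SimpleGraph V) (σ : Sym2 V → ℤˣ) (n : ℕ) : Prop :=
  ∃ f : V → Fin n, ∀ i : Fin n, IsBalancedSet G σ {v | f v = i}

/-- The balanced chromatic number of `(G, σ)`. -/
noncomputable def balancedChromNum (G : SimpleGraph V) (σ : Sym2 V → ℤˣ) : ℕ :=
  sInf {n | BalancedColorable G σ n}

/-- The set `X ⊆ V` can be covered by `n` sets each of which is balanced in `(G, σ)`. -/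
def BalancedColorableOn (G : SimpleGraph V) (σ : Sym2 V → ℤˣ) (X : Set V) (n : ℕ) : Prop :=
  ∃ f : V → Fin n, ∀ i : Fin n, IsBalancedSet G σ {v | v ∈ X ∧ f v = i}

/-- The balanced chromatic number of the signed subgraph of `(G, σ)` induced on `X`. -/
noncomputable def balancedChromNumOn (G : SimpleGraph V) (σ : Sym2 V → ℤˣ) (X : Set V) : ℕ :=
  sInf {n | BalancedColorableOn G σ X n}

/-- `(G, σ)⁻` : the spanning subgraph of `G` consisting of the negative edges. -/
def negSubgraph (G : SimpleGraph V) (σ : Sym2 V → ℤˣ) : SimpleGraph V where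
  Adj u v := G.Adj u v ∧ σ s(u, v) = -1
  symm := by
    constructor
    intro u v h
    refine ⟨h.1.symm, ?_⟩
    rw [Sym2.eq_swap]
    exact h.2
  loopless := by constructor; intro v h; exact G.irrefl h.1

/-- Two signatures on `G` are switching equivalent. -/
def SwitchEquiv (G : SimpleGraph V) (σ σ' : Sym2 V → ℤˣ) : Prop :=
  ∃ η : V → ℤˣ, ∀ u v : V, G.Adj u v → σ' s(u, v) = η u * σ s(u, v) * η v

/-- Every triangle of `(G, σ)` is positive. -/
def AllTrianglesPositive (G : SimpleGraph V) (σ : Sym2 V → ℤˣ) : Prop :=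
  ∀ u v w : V, G.Adj u v → G.Adj v w → G.Adj u w →
    σ s(u, v) * σ s(v, w) * σ s(u, w) = 1

/-- `G` contains an induced copy of `F`. -/
def HasInducedCopy {W : Type*} (F : SimpleGraph W) (G : SimpleGraph V) : Prop :=
  ∃ f : W ↪ V, ∀ a b : W, G.Adj (f a) (f b) ↔ F.Adj a b

/-- The star `K_{1,m}` with center `0` and `m` leaves. -/
def starGraph (m : ℕ) : SimpleGraph (Fin (m + 1)) where
  Adj a b := (a = 0 ∨ b = 0) ∧ a ≠ b
  symm := by constructor; rintro a b ⟨h1, h2⟩; exact ⟨h1.symm, h2.symm⟩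
  loopless := by constructor; rintro a ⟨_, h⟩; exact h rfl

private def disjUnionAdj {W1 W2 : Type*} (F1 : SimpleGraph W1) (F2 : SimpleGraph W2) :
    W1 ⊕ W2 → W1 ⊕ W2 → Prop
  | .inl x, .inl y => F1.Adj x y
  | .inr x, .inr y => F2.Adj x y
  | _, _ => False

/-- The disjoint union `F1 + F2` of two graphs. -/
def disjUnion {W1 W2 : Type*} (F1 : SimpleGraph W1) (F2 : SimpleGraph W2) :
    SimpleGraph (W1 ⊕ W2) where
  Adj := disjUnionAdj F1 F2
  symm := by
    constructor
    rintro (x | x) (y | y) h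
    · exact F1.adj_symm h
    · exact h.elim
    · exact h.elim
    · exact F2.adj_symm h
  loopless := by
    constructor
    rintro (x | x) h
    · exact F1.irrefl h
    · exact F2.irrefl h

private def fullJoinAdj {W1 W2 : Type*} (G1 : SimpleGraph W1) (G2 : SimpleGraph W2) :
    W1 ⊕ W2 → W1 ⊕ W2 → Prop
  | .inl x, .inl y => G1.Adj x y
  | .inr x, .inr y => G2.Adj x y
  | _, _ => True

/-- The full join `G1 ⋈ G2` of two vertex-disjoint graphs. -/
def fullJoin {W1 W2 : Type*} (G1 : SimpleGraph W1) (G2 : SimpleGraph W2) :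
    SimpleGraph (W1 ⊕ W2) where
  Adj := fullJoinAdj G1 G2
  symm := by
    constructor
    rintro (x | x) (y | y) h
    · exact G1.adj_symm h
    · trivial
    · trivial
    · exact G2.adj_symm h
  loopless := by
    constructor
    rintro (x | x) h
    · exact G1.irrefl h
    · exact G2.irrefl h

/-- The linear forest with `l` components, the `i`-th component being a path
on `m i` vertices. -/
def linearForest (l : ℕ) (m : Fin l → ℕ) : SimpleGraph (Σ i : Fin l, Fin (m i)) where
  Adj a b := a.1 = b.1 ∧ ((a.2 : ℕ) + 1 = (b.2 : ℕ) ∨ (b.2 : ℕ) + 1 = (a.2 : ℕ))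
  symm := by constructor; rintro a b ⟨h1, h2⟩; exact ⟨h1.symm, h2.symm⟩
  loopless := by constructor; rintro a ⟨_, h⟩; omega

/-- `(G, σ)` has an induced subgraph switching equivalent to the all-negative `K_4`. -/
def HasSwitchK4Neg (G : SimpleGraph V) (σ : Sym2 V → ℤˣ) : Prop :=
  ∃ f : Fin 4 ↪ V, (∀ a b : Fin 4, a ≠ b → G.Adj (f a) (f b)) ∧
    ∃ η : Fin 4 → ℤˣ, ∀ a b : Fin 4, a ≠ b → η a * σ s(f a, f b) * η b = -1

/-- `(G, σ)` has a triangle all of whose edges are negative. -/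
def HasNegTriangle (G : SimpleGraph V) (σ : Sym2 V → ℤˣ) : Prop :=
  ∃ u v w : V, G.Adj u v ∧ G.Adj v w ∧ G.Adj u w ∧
    σ s(u, v) = -1 ∧ σ s(v, w) = -1 ∧ σ s(u, w) = -1

/-- `(G, σ)` has four vertices inducing a copy of `(K_4, M)`: a complete graph on four
vertices whose negative edges form a perfect matching. -/
def HasK4M (G : SimpleGraph V) (σ : Sym2 V → ℤˣ) : Prop :=
  ∃ a b c d : V, a ≠ b ∧ a ≠ c ∧ a ≠ d ∧ b ≠ c ∧ b ≠ d ∧ c ≠ d ∧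
    G.Adj a b ∧ G.Adj a c ∧ G.Adj a d ∧ G.Adj b c ∧ G.Adj b d ∧ G.Adj c d ∧
    σ s(a, b) = -1 ∧ σ s(c, d) = -1 ∧
    σ s(a, c) = 1 ∧ σ s(a, d) = 1 ∧ σ s(b, c) = 1 ∧ σ s(b, d) = 1

/-- The vertices of the shift graph `S_{k,n}`: strictly increasing `k`-sequences
with values in `{1, …, n}`. -/
def ShiftVertex (k n : ℕ) : Type :=
  {s : Fin k → ℕ // StrictMono s ∧ ∀ i, s i ∈ Finset.Icc 1 n}

/-- `b` is obtained from `a` by shifting: `b = (a_2, …, a_k, t)` for some `t`. -/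
def ShiftFollows {k n : ℕ} (a b : ShiftVertex k n) : Prop :=
  ∀ (i : ℕ) (h : i + 1 < k), b.1 ⟨i, Nat.lt_of_succ_lt h⟩ = a.1 ⟨i + 1, h⟩

/-- The shift graph `S_{k,n}`. -/
def shiftGraph (k n : ℕ) : SimpleGraph (ShiftVertex k n) where
  Adj a b := a ≠ b ∧ (ShiftFollows a b ∨ ShiftFollows b a)
  symm := by constructor; rintro a b ⟨h1, h2⟩; exact ⟨h1.symm, h2.symm⟩
  loopless := by constructor; rintro a ⟨h, _⟩; exact h rfl


lemma walkSign_cons {G : SimpleGraph V} (σ : Sym2 V → ℤˣ) {u v w : V} (h : G.Adj u v)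
    (p : G.Walk v w) : walkSign σ (Walk.cons h p) = σ s(u, v) * walkSign σ p := by
  simp [walkSign]

lemma walkSign_eq_mul_of_forall_adj {G : SimpleGraph V} {σ : Sym2 V → ℤˣ} {X : Set V}
    (η : V → ℤˣ) (hη : ∀ a b, G.Adj a b → a ∈ X → b ∈ X → σ s(a, b) = η a * η b) :
    ∀ {u v : V} (w : G.Walk u v), (∀ x ∈ w.support, x ∈ X) → walkSign σ w = η u * η v
  | _, _, .nil, _ => by simp [walkSign, Int.units_mul_self]
  | _, _, @Walk.cons _ _ _ b _ h p, hX => by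
    have hp : ∀ x ∈ p.support, x ∈ X := fun x hx => hX x (by simp [hx])
    rw [walkSign_cons, hη _ _ h (hX _ (by simp)) (hp _ p.start_mem_support),
      walkSign_eq_mul_of_forall_adj η hη p hp, mul_assoc, ← mul_assoc (η b), Int.units_mul_self,
      one_mul]

/-- A set on which `σ` is switching equivalent to the all-positive signature is balanced. -/
lemma isBalancedSet_of_forall_adj {G : SimpleGraph V} {σ : Sym2 V → ℤˣ} {X : Set V}
    (η : V → ℤˣ) (hη : ∀ a b, G.Adj a b → a ∈ X → b ∈ X → σ s(a, b) = η a * η b) :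
    IsBalancedSet G σ X := fun v w _ hX => by
  rw [walkSign_eq_mul_of_forall_adj η hη w hX, Int.units_mul_self]

lemma AllTrianglesPositive.sign_eq_mul {G : SimpleGraph V} {σ : Sym2 V → ℤˣ}
    (h : AllTrianglesPositive G σ) {u v w : V} (huv : G.Adj u v) (hvw : G.Adj v w)
    (huw : G.Adj u w) : σ s(v, w) = σ s(u, v) * σ s(u, w) := by
  calc σ s(v, w) = (σ s(u, v))⁻¹ * (σ s(u, v) * σ s(v, w) * σ s(u, w)) * (σ s(u, w))⁻¹ := by
        group
    _ = σ s(u, v) * σ s(u, w) := by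
        rw [h u v w huv hvw huw, mul_one, Int.units_inv_eq_self, Int.units_inv_eq_self]

/-- Switching at the neighbours `u` of `v` with negative `uv` makes the edges at `v` positive;
positivity of the triangles through `v` then makes all of `N[v]` positive. -/
lemma AllTrianglesPositive.isBalancedSet_closedNeighborhood {G : SimpleGraph V}
    {σ : Sym2 V → ℤˣ} (h : AllTrianglesPositive G σ) (v : V) :
    IsBalancedSet G σ (insert v (G.neighborSet v)) := by
  classical
  refine isBalancedSet_of_forall_adj (fun u => if u = v then 1 else σ s(v, u)) ?_
  rintro a b hab (rfl | ha) (rfl | hb)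
  · exact (G.irrefl hab).elim
  · simp [hab.ne']
  · simp [hab.ne, Sym2.eq_swap]
  · simp [ha.ne', hb.ne', h.sign_eq_mul ha hab hb]

lemma triangle_sign_eq_one_of_isBalancedSet {G : SimpleGraph V} {σ : Sym2 V → ℤˣ} {X : Set V}
    (hX : IsBalancedSet G σ X) {u v w : V} (huv : G.Adj u v) (hvw : G.Adj v w)
    (huw : G.Adj u w) (hu : u ∈ X) (hv : v ∈ X) (hw : w ∈ X) :
    σ s(u, v) * σ s(v, w) * σ s(u, w) = 1 := by
  have hcycle : (Walk.cons huv (Walk.cons hvw (Walk.cons huw.symm .nil))).IsCycle := by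
    simp [Walk.cons_isCycle_iff, huv.ne, hvw.ne, huw.ne, huv.ne', huw.ne']
  have := hX _ hcycle (by simp [hu, hv, hw])
  simpa [walkSign_cons, walkSign, Sym2.eq_swap, mul_assoc] using this

theorem stmt10_general {V : Type*} (G : SimpleGraph V) (σ : Sym2 V → ℤˣ) :
    AllTrianglesPositive G σ ↔
      ∀ v : V, IsBalancedSet G σ (insert v (G.neighborSet v)) :=
  ⟨fun h => h.isBalancedSet_closedNeighborhood, fun h u _ _ huv hvw huw =>
    triangle_sign_eq_one_of_isBalancedSet (h u) huv hvw huw (Set.mem_insert u _)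
      (Set.mem_insert_of_mem u huv) (Set.mem_insert_of_mem u huw)⟩

/-- every triangle positive iff every closed neighborhood is balanced. -/
theorem stmt10 {V : Type*} [Fintype V] (G : SimpleGraph V) (σ : Sym2 V → ℤˣ) :
    AllTrianglesPositive G σ ↔
      ∀ v : V, IsBalancedSet G σ (insert v (G.neighborSet v)) :=
  stmt10_general G σ

end SignedGS
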